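/- arXiv:hep-th/9712002 — 6 statements merged into one kernel-verified Lean document; each statement's English description precedes it below -/
import Mathlib

section
/- Let a ∈ ℝ^{n+1}, let H̃ be the (n+2)×(n+2) antisymmetric matrix with H̃_{0j} = -a_j, H̃_{j0} = a_j (1 ≤ j ≤ n+1) and zeros elsewhere, and let η = diag(-1,1,...,1). Then -det(η + i H̃) = 1 + |a|^2. -/
/-- The matrix `H̃` with `H̃_{0j} = -a_j`, `H̃_{j0} = a_j` (`1 ≤ j ≤ n+1`) and zeros elsewhere. -/
def Htilde (n : ℕ) (a : Fin (n + 1) → ℝ) : Matrix (Fin (n + 2)) (Fin (n + 2)) ℝ :=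
  Matrix.of fun i j =>
    if (i : ℕ) = 0 then
      if hj : (j : ℕ) = 0 then 0 else -a ⟨(j : ℕ) - 1, by have := j.isLt; omega⟩
    else if (j : ℕ) = 0 then
      if hi : (i : ℕ) = 0 then 0 else a ⟨(i : ℕ) - 1, by have := i.isLt; omega⟩
    else 0

/-- The Minkowski metric `η = diag(-1, 1, …, 1)`. -/
def eta (n : ℕ) : Matrix (Fin (n + 2)) (Fin (n + 2)) ℝ :=
  Matrix.diagonal fun i => if (i : ℕ) = 0 then -1 else 1

/-!
Splitting off the index `0`, `η + i H̃` is the bordered matrix with corner `-1`, first row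
`-i a`, first column `i a` and identity block; its Schur complement with respect to that block is
`-1 - (-i a) ⬝ᵥ (i a) = -1 - |a|²`.
-/

def finSuccSplit (n : ℕ) : Unit ⊕ Fin (n + 1) ≃ Fin (n + 2) where
  toFun := Sum.elim (fun _ => 0) Fin.succ
  invFun i := Fin.cases (Sum.inl ()) Sum.inr i
  left_inv := by rintro (⟨⟩ | j) <;> simp
  right_inv i := by cases i using Fin.cases <;> simp

namespace Matrix

variable {R ι : Type*} [CommRing R] [Fintype ι] [DecidableEq ι]

theorem det_fromBlocks_scalar_row_col_one (c : R) (u v : ι → R) :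
    (fromBlocks (of fun _ _ => c : Matrix Unit Unit R) (replicateRow Unit u)
      (replicateCol Unit v) 1).det = c - u ⬝ᵥ v := by
  simp [det_fromBlocks_one₂₂, det_unique, replicateRow, replicateCol, mul_apply, dotProduct]

end Matrix

open Matrix

theorem eta_add_I_Htilde_submatrix_finSuccSplit (n : ℕ) (a : Fin (n + 1) → ℝ) :
    ((eta n).map (fun x : ℝ => (x : ℂ)) +
        Complex.I • (Htilde n a).map (fun x : ℝ => (x : ℂ))).submatrix
        (finSuccSplit n) (finSuccSplit n) =
      fromBlocks (of fun _ _ => -1) (replicateRow Unit fun j => -(Complex.I * a j))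
        (replicateCol Unit fun j => Complex.I * a j) 1 := by
  ext (⟨⟩ | i) (⟨⟩ | j) <;>
    simp [finSuccSplit, eta, Htilde, diagonal, one_apply, Fin.succ_ne_zero,
      (Fin.succ_ne_zero _).symm, apply_ite Complex.ofReal]

/-- `-det(η + i H̃) = 1 + |a|^2`. -/
theorem det_eta_add_I_Htilde (n : ℕ) (a : Fin (n + 1) → ℝ) :
    -Matrix.det
        ((eta n).map (fun x : ℝ => (x : ℂ)) +
          Complex.I • (Htilde n a).map (fun x : ℝ => (x : ℂ)))
      = ((1 + ∑ j, a j ^ 2 : ℝ) : ℂ) := by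
  rw [← det_submatrix_equiv_self (finSuccSplit n), eta_add_I_Htilde_submatrix_finSuccSplit,
    det_fromBlocks_scalar_row_col_one]
  have hterm (x : ℝ) : -(Complex.I * x) * (Complex.I * x) = (x : ℂ) ^ 2 := by
    linear_combination (-(x : ℂ) ^ 2) * Complex.I_sq
  simp only [dotProduct, hterm]
  push_cast
  ring
end

section
/- Let a, b > 0 and n ≥ 1. Then ∫_0^1 2^n t^{n-1} / (a + t^2 b)^n dt = (1/(ab)^{n/2}) ∫_0^∞ cosh^{-n}(s − α) ds, where α = (1/2) log(b/a). -/
/-! With `t = e^{-s}` and `e^α = √(b/a)` one has `cosh (s - α) = (a + t²b) / (2t√(ab))`, so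
`(ab)^{-n/2} cosh⁻ⁿ(s - α) = t · 2ⁿtⁿ⁻¹ / (a + t²b)ⁿ`, and `s ↦ e^{-s}` maps `(0, ∞)` onto
`(0, 1)` with `|dt/ds| = t`. -/

open MeasureTheory Real Set

section ExpSubstitution

variable {E : Type*} [NormedAddCommGroup E] [NormedSpace ℝ E]

theorem integral_comp_exp_Iic (g : ℝ → E) (a : ℝ) :
    ∫ x in Iic a, exp x • g (exp x) = ∫ y in Ioc 0 (exp a), g y := by
  rw [← image_exp_Iic]
  symm
  simpa [abs_of_pos (exp_pos _)] using integral_image_eq_integral_abs_deriv_smul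
      (measurableSet_Iic (a := a)) (fun x _ ↦ (hasDerivAt_exp x).hasDerivWithinAt)
      (fun x _ y _ hxy ↦ exp_injective hxy) g

theorem integral_comp_exp_neg_Ioi (g : ℝ → E) (a : ℝ) :
    ∫ x in Ioi a, exp (-x) • g (exp (-x)) = ∫ y in Ioc 0 (exp (-a)), g y := by
  rw [integral_comp_neg_Ioi a (fun x ↦ exp x • g (exp x)), integral_comp_exp_Iic]

end ExpSubstitution

theorem cosh_sub_half_log_div {a b : ℝ} (ha : 0 < a) (hb : 0 < b) (s : ℝ) :
    cosh (s - log (b / a) / 2) = (a + exp (-s) ^ 2 * b) / (2 * exp (-s) * √(a * b)) := by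
  have hexp : exp (log (b / a) / 2) = √b / √a := by
    rw [← sqrt_div hb.le, sqrt_eq_rpow, rpow_def_of_pos (div_pos hb ha), mul_one_div]
  rw [cosh_eq, neg_sub, exp_sub, exp_sub, hexp, sqrt_mul ha.le, exp_neg]
  field_simp
  rw [sq_sqrt ha.le, sq_sqrt hb.le]

/-- `∫₀¹ 2ⁿ tⁿ⁻¹/(a+t²b)ⁿ dt = (ab)^{-n/2} ∫₀^∞ cosh⁻ⁿ(s−α) ds` with `α = ½ log(b/a)`. -/
theorem integral_substitution (n : ℕ) (hn : 1 ≤ n) (a b : ℝ) (ha : 0 < a) (hb : 0 < b) :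
    ∫ t in (0 : ℝ)..1, 2 ^ n * t ^ (n - 1) / (a + t ^ 2 * b) ^ n
      = (1 / (a * b) ^ ((n : ℝ) / 2)) *
          ∫ s in Set.Ioi (0 : ℝ), (Real.cosh (s - Real.log (b / a) / 2))⁻¹ ^ n := by
  have hsub := integral_comp_exp_neg_Ioi (fun t ↦ 2 ^ n * t ^ (n - 1) / (a + t ^ 2 * b) ^ n) 0
  rw [neg_zero, exp_zero] at hsub
  rw [intervalIntegral.integral_of_le zero_le_one, ← hsub, ← integral_const_mul]
  refine setIntegral_congr_fun measurableSet_Ioi fun s _ ↦ ?_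
  obtain ⟨m, rfl⟩ := Nat.exists_eq_add_of_le' hn
  rw [cosh_sub_half_log_div ha hb, rpow_div_two_eq_sqrt _ (mul_pos ha hb).le, rpow_natCast,
    smul_eq_mul, Nat.add_sub_cancel, inv_div, div_pow]
  field_simp
  ring
end

section
/- For a, b > 0 and m ≥ 1, ∫_0^∞ cosh^{-(2m-1)}(s − α) ds = ((2m−3)!!/(2m−2)!!) ( 2 arctan √(b/a) + Σ_{k=1}^{m−1} ((2k−2)!!/(2k−1)!!) (b−a)(4ab)^{k−1/2} / (a+b)^{2k} ), where α = (1/2) log(b/a). -/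
/-!
After the substitution `t = s - α` the integral is `I_n(c) = ∫_c^∞ cosh⁻ⁿ t dt` with `c = -α`.
Integrating the derivative of `sinh t · cosh^{-(n+1)} t` gives the reduction formula
`(n + 1) I_{n+2}(c) = -sinh c · cosh^{-(n+1)} c + n I_n(c)`, and `I_1(c) = π/2 - arctan (sinh c)`;
unrolling the two-term recurrence over odd `n` produces the double-factorial coefficients.
At `α = ½ log (b/a)` one has `e^α = √(b/a)`, `sinh α = (b - a)/(2√(ab))`, `cosh α = (a + b)/(2√(ab))`,
and `π/2 + arctan (sinh α) = 2 arctan (e^α)`.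
-/

open MeasureTheory Real Filter Set Topology
open scoped Nat

lemma setIntegral_Ioi_comp_sub {E : Type*} [NormedAddCommGroup E] [NormedSpace ℝ E]
    (f : ℝ → E) (c d : ℝ) : ∫ s in Ioi c, f (s - d) = ∫ t in Ioi (c - d), f t := by
  have h := (measurePreserving_sub_right volume d).setIntegral_preimage_emb
    (measurableEmbedding_subRight d) f (Ioi (c - d))
  rwa [preimage_sub_const_Ioi, sub_add_cancel] at h

theorem eq_doubleFactorial_mul_of_recurrence (J t : ℕ → ℝ)
    (hJ : ∀ m, 1 ≤ m → 2 * m * J (m + 1) = t m + (2 * m - 1) * J m) {m : ℕ} (hm : 1 ≤ m) :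
    J m = ((2 * m - 3)‼ / (2 * m - 2)‼ : ℝ) *
      (J 1 + ∑ k ∈ Finset.Icc 1 (m - 1), ((2 * k - 2)‼ / (2 * k - 1)‼ : ℝ) * t k) := by
  obtain ⟨j, rfl⟩ := Nat.exists_eq_add_of_le' hm
  rw [show 2 * (j + 1) - 3 = 2 * j - 1 by omega, show 2 * (j + 1) - 2 = 2 * j by omega,
    Nat.add_sub_cancel]
  clear hm
  induction j with
  | zero => simp
  | succ j ih =>
    have hrec := hJ (j + 1) (by omega)
    rw [ih, mul_comm, ← eq_div_iff (by positivity)] at hrec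
    rw [hrec, Finset.sum_Icc_succ_top (by omega), show 2 * (j + 1) - 1 = 2 * j + 1 by omega,
      show 2 * (j + 1) - 2 = 2 * j by omega, mul_add 2 j 1, mul_one, Nat.doubleFactorial_add_one,
      Nat.doubleFactorial_add_two]
    set S := ∑ k ∈ Finset.Icc 1 j, ((2 * k - 2)‼ / (2 * k - 1)‼ : ℝ) * t k
    push_cast
    field_simp
    ring

namespace Real

lemma abs_sinh_le_cosh (t : ℝ) : |sinh t| ≤ cosh t := by
  rw [abs_sinh, ← cosh_abs t]
  exact (sinh_lt_cosh _).le

lemma cosh_inv_pow_le_two_mul_exp_neg {n : ℕ} (hn : n ≠ 0) (t : ℝ) :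
    (cosh t)⁻¹ ^ n ≤ 2 * exp (-t) :=
  calc (cosh t)⁻¹ ^ n ≤ (cosh t)⁻¹ :=
        pow_le_of_le_one (by positivity) (inv_le_one_of_one_le₀ (one_le_cosh t)) hn
    _ ≤ (exp t / 2)⁻¹ := by
      refine inv_anti₀ (by positivity) ?_
      rw [cosh_eq]
      linarith [exp_pos (-t)]
    _ = 2 * exp (-t) := by rw [exp_neg]; field_simp

lemma integrableOn_cosh_inv_pow_Ioi {n : ℕ} (hn : n ≠ 0) (c : ℝ) :
    IntegrableOn (fun t => (cosh t)⁻¹ ^ n) (Ioi c) := by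
  refine ((exp_neg_integrableOn_Ioi c one_pos).const_mul 2).mono' ?_ (ae_of_all _ fun t => ?_)
  · exact ((continuous_cosh.inv₀ fun t => (cosh_pos t).ne').pow n).aestronglyMeasurable
  · rw [norm_of_nonneg (by positivity), neg_one_mul]
    exact cosh_inv_pow_le_two_mul_exp_neg hn t

lemma tendsto_sinh_mul_cosh_inv_pow_atTop (n : ℕ) :
    Tendsto (fun t => sinh t * (cosh t)⁻¹ ^ (n + 2)) atTop (𝓝 0) := by
  have hexp : Tendsto (fun t => 2 * exp (-t)) atTop (𝓝 0) := by
    simpa using tendsto_exp_neg_atTop_nhds_zero.const_mul 2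
  refine squeeze_zero_norm (fun t => ?_) hexp
  calc ‖sinh t * (cosh t)⁻¹ ^ (n + 2)‖ ≤ cosh t * (cosh t)⁻¹ ^ (n + 2) := by
        rw [norm_mul, norm_of_nonneg (by positivity : (0 : ℝ) ≤ (cosh t)⁻¹ ^ (n + 2))]
        exact mul_le_mul_of_nonneg_right (abs_sinh_le_cosh t) (by positivity)
    _ = (cosh t)⁻¹ ^ (n + 1) := by
        rw [pow_succ' _ (n + 1), ← mul_assoc, mul_inv_cancel₀ (cosh_pos t).ne', one_mul]
    _ ≤ 2 * exp (-t) := cosh_inv_pow_le_two_mul_exp_neg n.succ_ne_zero t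

lemma tendsto_arctan_sinh_atTop : Tendsto (fun t => arctan (sinh t)) atTop (𝓝 (π / 2)) := by
  have hsinh : Tendsto sinh atTop atTop :=
    tendsto_atTop_mono' _ ((eventually_ge_atTop 0).mono fun t ht => self_le_sinh_iff.2 ht)
      tendsto_id
  exact (tendsto_arctan_atTop.comp hsinh).mono_right nhdsWithin_le_nhds

lemma hasDerivAt_sinh_mul_cosh_inv_pow (n : ℕ) (t : ℝ) :
    HasDerivAt (fun t => sinh t * (cosh t)⁻¹ ^ (n + 1))
      ((n + 1) * (cosh t)⁻¹ ^ (n + 2) - n * (cosh t)⁻¹ ^ n) t := by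
  refine ((hasDerivAt_sinh t).mul
    (((hasDerivAt_cosh t).inv (cosh_pos t).ne').pow (n + 1))).congr_deriv ?_
  simp only [Pi.pow_apply, Pi.inv_apply, Nat.add_sub_cancel, inv_pow]
  field_simp
  rw [sinh_sq]
  push_cast
  ring

lemma integral_Ioi_cosh_inv (c : ℝ) : ∫ t in Ioi c, (cosh t)⁻¹ = π / 2 - arctan (sinh c) := by
  refine integral_Ioi_of_hasDerivAt_of_tendsto' (fun t _ => ?_)
    (by simpa using integrableOn_cosh_inv_pow_Ioi one_ne_zero c) tendsto_arctan_sinh_atTop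
  refine (hasDerivAt_sinh t).arctan.congr_deriv ?_
  rw [← cosh_sq']
  field_simp [(cosh_pos t).ne']

lemma integral_Ioi_cosh_inv_pow_add_two {n : ℕ} (hn : n ≠ 0) (c : ℝ) :
    (n + 1) * ∫ t in Ioi c, (cosh t)⁻¹ ^ (n + 2)
      = -(sinh c * (cosh c)⁻¹ ^ (n + 1)) + n * ∫ t in Ioi c, (cosh t)⁻¹ ^ n := by
  have hn₂ := (integrableOn_cosh_inv_pow_Ioi (n := n + 2) (by omega) c).const_mul ((n : ℝ) + 1)
  have hn₀ := (integrableOn_cosh_inv_pow_Ioi hn c).const_mul (n : ℝ)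
  obtain ⟨k, rfl⟩ := Nat.exists_eq_add_one_of_ne_zero hn
  have hFTC := integral_Ioi_of_hasDerivAt_of_tendsto'
    (fun t _ => hasDerivAt_sinh_mul_cosh_inv_pow (k + 1) t) (hn₂.sub hn₀)
    (tendsto_sinh_mul_cosh_inv_pow_atTop k)
  rw [integral_sub hn₂ hn₀, integral_const_mul, integral_const_mul] at hFTC
  linarith

theorem integral_Ioi_cosh_inv_pow_two_mul_sub_one {m : ℕ} (hm : 1 ≤ m) (c : ℝ) :
    ∫ t in Ioi c, (cosh t)⁻¹ ^ (2 * m - 1) = ((2 * m - 3)‼ / (2 * m - 2)‼ : ℝ) *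
      (π / 2 - arctan (sinh c) - ∑ k ∈ Finset.Icc 1 (m - 1),
        ((2 * k - 2)‼ / (2 * k - 1)‼ : ℝ) * (sinh c * (cosh c)⁻¹ ^ (2 * k))) := by
  rw [eq_doubleFactorial_mul_of_recurrence (fun m => ∫ t in Ioi c, (cosh t)⁻¹ ^ (2 * m - 1))
    (fun k => -(sinh c * (cosh c)⁻¹ ^ (2 * k))) (fun m hm => ?_) hm]
  · simp [integral_Ioi_cosh_inv, Finset.sum_neg_distrib, sub_eq_add_neg]
  · have h := integral_Ioi_cosh_inv_pow_add_two (n := 2 * m - 1) (by omega) c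
    rw [show 2 * m - 1 + 2 = 2 * (m + 1) - 1 by omega, show 2 * m - 1 + 1 = 2 * m by omega,
      Nat.cast_sub (by omega)] at h
    push_cast at h
    rwa [sub_add_cancel] at h

lemma pi_div_two_add_arctan_sinh (x : ℝ) : π / 2 + arctan (sinh x) = 2 * arctan (exp x) := by
  have hx := exp_pos x
  have h := arctan_add (x := exp x) (y := -(exp x)⁻¹)
    (by rw [mul_neg, mul_inv_cancel₀ hx.ne']; norm_num)
  rw [arctan_neg, arctan_inv_of_pos hx] at h
  have harg : (exp x + -(exp x)⁻¹) / (1 - exp x * -(exp x)⁻¹) = (exp x - (exp x)⁻¹) / 2 := by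
    field_simp; ring
  rw [harg] at h
  rw [sinh_eq, exp_neg]
  linarith

lemma exp_log_div_two {x : ℝ} (hx : 0 < x) : exp (log x / 2) = √x := by
  rw [← log_sqrt hx.le, exp_log (sqrt_pos.2 hx)]

lemma sinh_mul_cosh_inv_pow_log_div_div_two {a b : ℝ} (ha : 0 < a) (hb : 0 < b) (k : ℕ) :
    sinh (log (b / a) / 2) * (cosh (log (b / a) / 2))⁻¹ ^ (2 * k)
      = (b - a) * (4 * a * b) ^ ((k : ℝ) - 1 / 2) / (a + b) ^ (2 * k) := by
  obtain ⟨p, hp, rfl⟩ : ∃ p, 0 < p ∧ a = p ^ 2 := ⟨√a, sqrt_pos.2 ha, (sq_sqrt ha.le).symm⟩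
  obtain ⟨q, hq, rfl⟩ : ∃ q, 0 < q ∧ b = q ^ 2 := ⟨√b, sqrt_pos.2 hb, (sq_sqrt hb.le).symm⟩
  have hlog : log (q ^ 2 / p ^ 2) / 2 = log (q / p) := by
    rw [← div_pow, log_pow]; push_cast; ring
  have hsinh : sinh (log (q / p)) = (q ^ 2 - p ^ 2) / (2 * p * q) := by
    rw [sinh_log (by positivity)]; field_simp
  have hcosh : cosh (log (q / p)) = (q ^ 2 + p ^ 2) / (2 * p * q) := by
    rw [cosh_log (by positivity)]; field_simp
  have hrpow : (4 * p ^ 2 * q ^ 2) ^ ((k : ℝ) - 1 / 2) = (2 * p * q) ^ (2 * k) / (2 * p * q) := by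
    rw [rpow_sub (by positivity), rpow_natCast, ← sqrt_eq_rpow,
      show 4 * p ^ 2 * q ^ 2 = (2 * p * q) ^ 2 by ring, sqrt_sq (by positivity), ← pow_mul]
  rw [hlog, hsinh, hcosh, hrpow, inv_div, div_pow]
  field_simp
  ring

end Real

/-- Closed form of `I[-(2m-1)] = ∫₀^∞ cosh^{-(2m-1)}(s−α) ds`, `α = ½ log(b/a)`. -/
theorem coshInt_odd (m : ℕ) (hm : 1 ≤ m) (a b : ℝ) (ha : 0 < a) (hb : 0 < b) :
    (∫ s in Set.Ioi (0 : ℝ), (Real.cosh (s - Real.log (b / a) / 2))⁻¹ ^ (2 * m - 1))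
      = ((Nat.doubleFactorial (2 * m - 3) : ℝ) / (Nat.doubleFactorial (2 * m - 2) : ℝ)) *
          (2 * Real.arctan (Real.sqrt (b / a)) +
            ∑ k ∈ Finset.Icc 1 (m - 1),
              ((Nat.doubleFactorial (2 * k - 2) : ℝ) / (Nat.doubleFactorial (2 * k - 1) : ℝ)) *
                ((b - a) * (4 * a * b) ^ ((k : ℝ) - 1 / 2) / (a + b) ^ (2 * k))) := by
  rw [setIntegral_Ioi_comp_sub (fun t => (cosh t)⁻¹ ^ (2 * m - 1)), zero_sub,
    integral_Ioi_cosh_inv_pow_two_mul_sub_one hm, sinh_neg, cosh_neg, arctan_neg, sub_neg_eq_add,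
    pi_div_two_add_arctan_sinh, exp_log_div_two (div_pos hb ha)]
  simp only [neg_mul, sinh_mul_cosh_inv_pow_log_div_div_two ha hb, mul_neg,
    Finset.sum_neg_distrib, sub_neg_eq_add]
end

section
/- For a, b > 0 and m ≥ 2, ∫_0^∞ cosh^{-(2m-2)}(s − α) ds = ((2m−4)!!/(2m−3)!!) ( 2b/(a+b) + Σ_{k=2}^{m−1} ((2k−3)!!/(2k−2)!!) (b−a)(4ab)^{k−1} / (a+b)^{2k−1} ), where α = (1/2) log(b/a). -/
/-!
The function `F_n x = sinh x · cosh⁻ⁿ⁻¹ x = tanh x · cosh⁻ⁿ x` satisfies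
`F_n' = (n + 1) cosh^{-(n+2)} - n cosh^{-n}` and `F_n → 0 ^ n` at `∞`, so the integrals
`I_n(c) = ∫_c^∞ cosh^{-n}` obey `(n + 1) I_{n+2}(c) = n I_n(c) + 0 ^ n - tanh c · cosh^{-n} c`.
Iterating from `I_2(c) = 1 - tanh c` expresses `I_{2j+2}(c)` through `tanh c` and `cosh^{-2} c`.
The shift `s ↦ s - α` gives `c = -α`, and for `α = ½ log (b / a)` one has
`tanh α = (b - a) / (a + b)` and `cosh^{-2} α = 1 - tanh² α = 4ab / (a + b)²`.
-/

open MeasureTheory Real Set Filter Topology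

namespace Real

lemma inv_cosh_le_two_mul_exp_neg (x : ℝ) : (cosh x)⁻¹ ≤ 2 * exp (-x) := by
  rw [inv_le_comm₀ (cosh_pos x) (by positivity), mul_inv, ← exp_neg, neg_neg, cosh_eq]
  linarith [exp_pos (-x)]

lemma tendsto_inv_cosh_atTop : Tendsto (fun x => (cosh x)⁻¹) atTop (𝓝 0) :=
  squeeze_zero (fun x => (inv_pos.2 (cosh_pos x)).le) inv_cosh_le_two_mul_exp_neg
    (by simpa using tendsto_exp_neg_atTop_nhds_zero.const_mul 2)

lemma one_sub_tanh (x : ℝ) : 1 - tanh x = exp (-x) * (cosh x)⁻¹ := by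
  rw [tanh_eq_sinh_div_cosh, ← cosh_sub_sinh]
  field_simp

lemma tendsto_tanh_atTop : Tendsto tanh atTop (𝓝 1) := by
  have h := tendsto_exp_neg_atTop_nhds_zero.mul tendsto_inv_cosh_atTop
  simp_rw [← one_sub_tanh, zero_mul] at h
  simpa using (tendsto_const_nhds (x := (1 : ℝ))).sub h

lemma integrableOn_inv_cosh_pow (c : ℝ) {n : ℕ} (hn : n ≠ 0) :
    IntegrableOn (fun x => (cosh x)⁻¹ ^ n) (Ioi c) := by
  refine ((exp_neg_integrableOn_Ioi c one_pos).const_mul 2).mono' (by fun_prop) ?_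
  filter_upwards with x
  rw [norm_of_nonneg (by positivity), neg_one_mul]
  calc (cosh x)⁻¹ ^ n ≤ (cosh x)⁻¹ :=
        pow_le_of_le_one (by positivity) (inv_le_one_of_one_le₀ (one_le_cosh x)) hn
    _ ≤ 2 * exp (-x) := inv_cosh_le_two_mul_exp_neg x

lemma hasDerivAt_sinh_mul_inv_cosh_pow (n : ℕ) (x : ℝ) :
    HasDerivAt (fun y => sinh y * (cosh y)⁻¹ ^ (n + 1))
      ((n + 1) * (cosh x)⁻¹ ^ (n + 2) - n * (cosh x)⁻¹ ^ n) x := by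
  refine ((hasDerivAt_sinh x).mul
    (((hasDerivAt_cosh x).inv (cosh_pos x).ne').pow (n + 1))).congr_deriv ?_
  have hc : cosh x * (cosh x)⁻¹ = 1 := mul_inv_cancel₀ (cosh_pos x).ne'
  simp only [Nat.add_sub_cancel, Pi.pow_apply, Pi.inv_apply, div_eq_mul_inv, ← inv_pow]
  push_cast
  linear_combination (-(n + 1 : ℝ) * (cosh x)⁻¹ ^ (n + 2)) * sinh_sq x
    - (cosh x)⁻¹ ^ n * ((n + 1) * cosh x * (cosh x)⁻¹ + n) * hc

lemma sinh_mul_inv_cosh_pow_succ (n : ℕ) (x : ℝ) :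
    sinh x * (cosh x)⁻¹ ^ (n + 1) = tanh x * (cosh x)⁻¹ ^ n := by
  rw [tanh_eq_sinh_div_cosh, pow_succ]
  ring

-- For `n = 0` the integral of `1` on the right is a junk value, but its factor `n` vanishes.
lemma integral_Ioi_inv_cosh_pow_add_two (c : ℝ) (n : ℕ) :
    (n + 1) * ∫ x in Ioi c, (cosh x)⁻¹ ^ (n + 2) =
      n * (∫ x in Ioi c, (cosh x)⁻¹ ^ n) + 0 ^ n - tanh c * (cosh c)⁻¹ ^ n := by
  have hlim : Tendsto (fun x => sinh x * (cosh x)⁻¹ ^ (n + 1)) atTop (𝓝 (0 ^ n)) := by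
    have h := tendsto_tanh_atTop.mul (tendsto_inv_cosh_atTop.pow n)
    rw [one_mul] at h
    simpa only [sinh_mul_inv_cosh_pow_succ] using h
  have hint_n : IntegrableOn (fun x => (n : ℝ) * (cosh x)⁻¹ ^ n) (Ioi c) := by
    rcases eq_or_ne n 0 with rfl | hn
    · simp
    · exact (integrableOn_inv_cosh_pow c hn).const_mul _
  have hint_add_two : IntegrableOn (fun x => ((n : ℝ) + 1) * (cosh x)⁻¹ ^ (n + 2)) (Ioi c) :=
    (integrableOn_inv_cosh_pow c (by omega)).const_mul _
  have hftc := integral_Ioi_of_hasDerivAt_of_tendsto'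
    (fun x _ => hasDerivAt_sinh_mul_inv_cosh_pow n x) (hint_add_two.sub hint_n) hlim
  rw [integral_sub hint_add_two hint_n,
    integral_const_mul, integral_const_mul, sinh_mul_inv_cosh_pow_succ] at hftc
  linarith

open Nat in
lemma integral_Ioi_inv_cosh_pow_two_mul_add_two (c : ℝ) (j : ℕ) :
    ∫ x in Ioi c, (cosh x)⁻¹ ^ (2 * j + 2) =
      ((2 * j)‼ / (2 * j + 1)‼ : ℝ) * (1 - tanh c - ∑ i ∈ Finset.range j,
        ((2 * i + 1)‼ / (2 * i + 2)‼ : ℝ) * (tanh c * (cosh c)⁻¹ ^ (2 * i + 2))) := by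
  induction j with
  | zero => simpa using integral_Ioi_inv_cosh_pow_add_two c 0
  | succ j ih =>
    have hrec := integral_Ioi_inv_cosh_pow_add_two c (2 * j + 2)
    rw [ih] at hrec
    rw [show 2 * (j + 1) + 2 = 2 * j + 2 + 2 by ring, show 2 * (j + 1) + 1 = 2 * j + 1 + 2 by ring,
      show 2 * (j + 1) = 2 * j + 2 by ring, Finset.sum_range_succ, Nat.doubleFactorial_add_two,
      Nat.doubleFactorial_add_two (2 * j + 1)]
    have h0 : (0 : ℝ) < (2 * j)‼ := by exact_mod_cast Nat.doubleFactorial_pos _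
    have h1 : (0 : ℝ) < (2 * j + 1)‼ := by exact_mod_cast Nat.doubleFactorial_pos _
    push_cast at hrec ⊢
    rw [zero_pow (by omega), add_zero] at hrec
    generalize ∫ x in Ioi c, (cosh x)⁻¹ ^ (2 * j + 2 + 2) = I at hrec ⊢
    generalize ∑ i ∈ Finset.range j, ((2 * i + 1)‼ / (2 * i + 2)‼ : ℝ) *
      (tanh c * (cosh c)⁻¹ ^ (2 * i + 2)) = S at hrec ⊢
    field_simp
    field_simp at hrec
    linear_combination hrec

lemma tanh_log_div_two {x : ℝ} (hx : 0 < x) : tanh (log x / 2) = (x - 1) / (x + 1) := by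
  have h : exp (log x / 2) ^ 2 = x := by
    rw [← exp_nat_mul, Nat.cast_ofNat, mul_div_cancel₀ _ two_ne_zero, exp_log hx]
  generalize log x / 2 = y at h ⊢
  subst h
  rw [tanh_eq_sinh_div_cosh, sinh_eq, cosh_eq, exp_neg]
  field_simp

lemma inv_cosh_sq (x : ℝ) : (cosh x)⁻¹ ^ 2 = 1 - tanh x ^ 2 := by
  rw [tanh_eq_sinh_div_cosh, div_pow, sinh_sq]
  field_simp
  ring

end Real

lemma MeasureTheory.integral_Ioi_comp_sub_right {E : Type*} [NormedAddCommGroup E]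
    [NormedSpace ℝ E] (f : ℝ → E) (a d : ℝ) :
    ∫ x in Ioi a, f (x - d) = ∫ x in Ioi (a - d), f x := by
  simpa using (measurePreserving_sub_right volume d).setIntegral_preimage_emb
    (measurableEmbedding_subRight d) f (Ioi (a - d))

/-- Closed form of `I[-(2m-2)] = ∫₀^∞ cosh^{-(2m-2)}(s−α) ds`, `α = ½ log(b/a)`. -/
theorem coshInt_even (m : ℕ) (hm : 2 ≤ m) (a b : ℝ) (ha : 0 < a) (hb : 0 < b) :
    (∫ s in Set.Ioi (0 : ℝ), (Real.cosh (s - Real.log (b / a) / 2))⁻¹ ^ (2 * m - 2))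
      = ((Nat.doubleFactorial (2 * m - 4) : ℝ) / (Nat.doubleFactorial (2 * m - 3) : ℝ)) *
          (2 * b / (a + b) +
            ∑ k ∈ Finset.Icc 2 (m - 1),
              ((Nat.doubleFactorial (2 * k - 3) : ℝ) / (Nat.doubleFactorial (2 * k - 2) : ℝ)) *
                ((b - a) * (4 * a * b) ^ (k - 1) / (a + b) ^ (2 * k - 1))) := by
  obtain ⟨j, rfl⟩ : ∃ j, m = j + 2 := ⟨m - 2, by omega⟩
  set α := log (b / a) / 2
  have htanh : tanh α = (b - a) / (a + b) := by
    rw [tanh_log_div_two (div_pos hb ha)]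
    field_simp
    ring
  have hsech : (cosh α)⁻¹ ^ 2 = 4 * a * b / (a + b) ^ 2 := by
    rw [inv_cosh_sq, htanh]
    field_simp
    ring
  rw [integral_Ioi_comp_sub_right (fun x => (cosh x)⁻¹ ^ (2 * (j + 2) - 2)), zero_sub,
    show 2 * (j + 2) - 2 = 2 * j + 2 by omega, integral_Ioi_inv_cosh_pow_two_mul_add_two,
    show 2 * (j + 2) - 4 = 2 * j by omega, show 2 * (j + 2) - 3 = 2 * j + 1 by omega,
    ← Finset.Ico_add_one_right_eq_Icc, Finset.sum_Ico_eq_sum_range,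
    show j + 2 - 1 + 1 - 2 = j by omega, tanh_neg, cosh_neg]
  simp only [neg_mul, mul_neg, Finset.sum_neg_distrib, sub_neg_eq_add, htanh]
  congr 2
  · field_simp
    ring
  · refine Finset.sum_congr rfl fun i _ => ?_
    rw [show 2 * (2 + i) - 3 = 2 * i + 1 by omega, show 2 * (2 + i) - 2 = 2 * i + 2 by omega,
      show 2 + i - 1 = i + 1 by omega, show 2 * (2 + i) - 1 = 2 * (i + 1) + 1 by omega,
      show 2 * i + 2 = 2 * (i + 1) by ring, pow_mul, hsech, div_pow, ← pow_mul, pow_succ (a + b)]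
    field_simp
end

section
/- Define X_n for a, b > 0 recursively by X_1 = arctan(√(b/a)) / √(ab), X_2 = 1/(2a(a+b)), and X_n = (∂/∂a)(∂/∂b) X_{n-2}. Then X_n satisfies the recursion X_n = (1/(4ab)) ( (n−2)^2 X_{n−2} + (n−2)! (b−a)/(a+b)^{n−1} ) for n ≥ 3. -/
/-- `X_n`, defined by `X_1 = arctan(√(b/a))/√(ab)`, `X_2 = 1/(2a(a+b))`,
`X_{n+2} = ∂_a ∂_b X_n`. -/
noncomputable def X : ℕ → ℝ → ℝ → ℝ
  | 0, _, _ => 0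
  | 1, a, b => Real.arctan (Real.sqrt (b / a)) / Real.sqrt (a * b)
  | 2, a, b => 1 / (2 * a * (a + b))
  | n + 3, a, b => deriv (fun a' => deriv (fun b' => X (n + 1) a' b') b) a

/-!
With `S = a∂_a + b∂_b` and `T = -a∂_a + b∂_b`, every `X_n` solves the first-order system
`S X_n = -n X_n` (homogeneity of degree `-n`) and `T X_n = (n-1)!/(a+b)^n`. Since `S` and `T` commute,
`4ab ∂_a∂_b = (S - T)(S + T) = S² - T²`, and applying this to `X_n` is the recursion.
The system passes from `X_n` to `X_{n+2} = ∂_a∂_b X_n`, as `T` commutes with `∂_a∂_b` and `∂_a∂_b`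
lowers the degree of homogeneity by 2; this is checked by differentiating the recursion formula, the `b`-derivative
following from the `a`-derivative by the symmetry `(a, b, c) ↦ (b, a, -c)` of the system.
The cases `n = 1, 2` are direct computations.
-/

open Filter Topology Nat

noncomputable def mixedDeriv (f : ℝ → ℝ → ℝ) (a b : ℝ) : ℝ :=
  deriv (fun a' => deriv (fun b' => f a' b') b) a

/-- `S f = -n f` and `T f = c / (a + b) ^ n` on the open quadrant, solved for `∂_a f` and `∂_b f`. -/
def EulerSystem (f : ℝ → ℝ → ℝ) (n : ℕ) (c : ℝ) : Prop :=
  ∀ a b : ℝ, 0 < a → 0 < b →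
    HasDerivAt (fun a' => f a' b) (-(n * f a b + c / (a + b) ^ n) / (2 * a)) a ∧
    HasDerivAt (fun b' => f a b') ((c / (a + b) ^ n - n * f a b) / (2 * b)) b

noncomputable def mixedDerivRHS (f : ℝ → ℝ → ℝ) (n : ℕ) (c a b : ℝ) : ℝ :=
  (n ^ 2 * f a b + n * c * (b - a) / (a + b) ^ (n + 1)) / (4 * a * b)

lemma mixedDerivRHS_swap (f : ℝ → ℝ → ℝ) (n : ℕ) (c a b : ℝ) :
    mixedDerivRHS (fun a b => f b a) n (-c) a b = mixedDerivRHS f n c b a := by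
  unfold mixedDerivRHS
  rw [add_comm a b]
  ring

lemma hasDerivAt_div_add_pow (c b : ℝ) (n : ℕ) {a : ℝ} (h : a + b ≠ 0) :
    HasDerivAt (fun a' => c / (a' + b) ^ n) (-(n * c) / (a + b) ^ (n + 1)) a := by
  have hpow := ((hasDerivAt_id' a).add_const b).fun_pow n
  refine ((hasDerivAt_const a c).fun_div hpow (pow_ne_zero n h)).congr_deriv ?_
  rcases n with _ | n
  · simp
  · field_simp
    push_cast
    ring

namespace EulerSystem

variable {f g : ℝ → ℝ → ℝ} {n : ℕ} {c : ℝ}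

theorem congr (hf : EulerSystem f n c) (hfg : ∀ a b, 0 < a → 0 < b → f a b = g a b) :
    EulerSystem g n c := by
  intro a b ha hb
  obtain ⟨hfa, hfb⟩ := hf a b ha hb
  rw [← hfg a b ha hb]
  refine ⟨hfa.congr_of_eventuallyEq ?_, hfb.congr_of_eventuallyEq ?_⟩
  · filter_upwards [Ioi_mem_nhds ha] with x hx using (hfg x b hx hb).symm
  · filter_upwards [Ioi_mem_nhds hb] with y hy using (hfg a y ha hy).symm

theorem swap (hf : EulerSystem f n c) : EulerSystem (fun a b => f b a) n (-c) := by
  intro a b ha hb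
  obtain ⟨hfa, hfb⟩ := hf b a hb ha
  rw [add_comm b a] at hfa hfb
  constructor
  · convert hfb using 1; ring
  · convert hfa using 1; ring

theorem mixedDeriv_eq (hf : EulerSystem f n c) {a b : ℝ} (ha : 0 < a) (hb : 0 < b) :
    mixedDeriv f a b = mixedDerivRHS f n c a b := by
  have hab : a + b ≠ 0 := by positivity
  have hinner : (fun a' => deriv (fun b' => f a' b') b) =ᶠ[𝓝 a]
      fun a' => (c / (a' + b) ^ n - n * f a' b) / (2 * b) := by
    filter_upwards [Ioi_mem_nhds ha] with x hx using (hf x b hx hb).2.deriv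
  have h := ((hasDerivAt_div_add_pow c b n hab).fun_sub
    ((hf a b ha hb).1.const_mul (n : ℝ))).div_const (2 * b)
  rw [mixedDeriv, hinner.deriv_eq, h.deriv, mixedDerivRHS]
  field_simp
  ring

theorem hasDerivAt_mixedDerivRHS_fst (hf : EulerSystem f n c) {a b : ℝ} (ha : 0 < a) (hb : 0 < b) :
    HasDerivAt (fun a' => mixedDerivRHS f n c a' b)
      (-((n + 2) * mixedDerivRHS f n c a b + n * (n + 1) * c / (a + b) ^ (n + 2)) / (2 * a)) a := by
  have hab : a + b ≠ 0 := by positivity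
  have hnum := ((hf a b ha hb).1.const_mul ((n : ℝ) ^ 2)).fun_add
    ((hasDerivAt_div_add_pow (n * c) b (n + 1) hab).fun_mul
      ((hasDerivAt_const a b).fun_sub (hasDerivAt_id' a)))
  have hden := ((hasDerivAt_id' a).const_mul (4 : ℝ)).mul_const b
  refine ((hnum.fun_div hden (by positivity)).congr_of_eventuallyEq ?_).congr_deriv ?_
  · exact .of_forall fun a' => by simp only [mixedDerivRHS]; ring
  · simp only [mixedDerivRHS]
    field_simp
    push_cast
    ring

theorem mixedDerivRHS (hf : EulerSystem f n c) :
    EulerSystem (mixedDerivRHS f n c) (n + 2) (n * (n + 1) * c) := by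
  intro a b ha hb
  push_cast
  refine ⟨hf.hasDerivAt_mixedDerivRHS_fst ha hb, ?_⟩
  have h := hf.swap.hasDerivAt_mixedDerivRHS_fst hb ha
  simp only [mixedDerivRHS_swap] at h
  convert h using 1
  rw [add_comm b a]
  ring

theorem mixedDeriv (hf : EulerSystem f n c) :
    EulerSystem (mixedDeriv f) (n + 2) (n * (n + 1) * c) :=
  hf.mixedDerivRHS.congr fun _ _ ha hb => (hf.mixedDeriv_eq ha hb).symm

end EulerSystem

lemma eulerSystem_X_two : EulerSystem (X 2) 2 1 := by
  intro a b ha hb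
  constructor
  · have hden := ((hasDerivAt_id' a).const_mul 2).fun_mul ((hasDerivAt_id' a).add_const b)
    refine ((hasDerivAt_const a (1 : ℝ)).fun_div hden (by positivity)).congr_deriv ?_
    simp only [X]
    field_simp
    ring
  · have hden := ((hasDerivAt_id' b).const_add a).const_mul (2 * a)
    refine ((hasDerivAt_const b (1 : ℝ)).fun_div hden (by positivity)).congr_deriv ?_
    simp only [X]
    field_simp
    ring

lemma eulerSystem_X_one : EulerSystem (X 1) 1 1 := by
  intro a b ha hb
  -- with `a = s²`, `b = t²` both square roots become polynomial
  obtain ⟨s, hs, rfl⟩ : ∃ s : ℝ, 0 < s ∧ a = s ^ 2 :=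
    ⟨√a, Real.sqrt_pos.2 ha, (Real.sq_sqrt ha.le).symm⟩
  obtain ⟨t, ht, rfl⟩ : ∃ t : ℝ, 0 < t ∧ b = t ^ 2 :=
    ⟨√b, Real.sqrt_pos.2 hb, (Real.sq_sqrt hb.le).symm⟩
  have hquot : √(t ^ 2 / s ^ 2) = t / s := by
    rw [Real.sqrt_div (by positivity), Real.sqrt_sq ht.le, Real.sqrt_sq hs.le]
  have hprod : √(s ^ 2 * t ^ 2) = s * t := by
    rw [Real.sqrt_mul (by positivity), Real.sqrt_sq ht.le, Real.sqrt_sq hs.le]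
  constructor
  · have hratio := ((hasDerivAt_const (s ^ 2) (t ^ 2)).fun_div (hasDerivAt_id' (s ^ 2))
      (by positivity)).sqrt (by positivity)
    have hroot := ((hasDerivAt_id' (s ^ 2)).mul_const (t ^ 2)).sqrt (by positivity)
    refine (hratio.arctan.fun_div hroot (by rw [hprod]; positivity)).congr_deriv ?_
    simp only [X, hquot, hprod]
    field_simp
    ring
  · have hratio := ((hasDerivAt_id' (t ^ 2)).div_const (s ^ 2)).sqrt (by positivity)
    have hroot := ((hasDerivAt_id' (t ^ 2)).const_mul (s ^ 2)).sqrt (by positivity)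
    refine (hratio.arctan.fun_div hroot (by rw [hprod]; positivity)).congr_deriv ?_
    simp only [X, hquot, hprod]
    field_simp
    ring

lemma X_add_three (n : ℕ) : X (n + 3) = mixedDeriv (X (n + 1)) := rfl

lemma eulerSystem_X : ∀ n : ℕ, EulerSystem (X (n + 1)) (n + 1) n !
  | 0 => by simpa using eulerSystem_X_one
  | 1 => by simpa using eulerSystem_X_two
  | n + 2 => by
    have h := (eulerSystem_X n).mixedDeriv
    rw [← X_add_three] at h
    convert h using 1
    push_cast [Nat.factorial_succ]
    ring

/-- `X_n = (1/(4ab)) ((n−2)² X_{n−2} + (n−2)! (b−a)/(a+b)^{n−1})` for `n ≥ 3`. -/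
theorem X_recursion (n : ℕ) (hn : 3 ≤ n) (a b : ℝ) (ha : 0 < a) (hb : 0 < b) :
    X n a b = (1 / (4 * a * b)) *
      (((n : ℝ) - 2) ^ 2 * X (n - 2) a b +
        (Nat.factorial (n - 2) : ℝ) * (b - a) / (a + b) ^ (n - 1)) := by
  obtain ⟨m, rfl⟩ : ∃ m, n = m + 3 := ⟨n - 3, by omega⟩
  rw [X_add_three, (eulerSystem_X m).mixedDeriv_eq ha hb, mixedDerivRHS,
    show m + 3 - 2 = m + 1 by omega, show m + 3 - 1 = m + 2 by omega]
  push_cast [Nat.factorial_succ]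
  ring
end

section
/- Let X_1(a,b) = arctan(√(b/a))/√(ab) on (0,∞)². Then X_1 satisfies S X_1 = −X_1 and T X_1 = 1/(a+b), where S = a ∂/∂a + b ∂/∂b and T = −a ∂/∂a + b ∂/∂b. -/
/-!
Each Euler derivative of `X₁` splits into `-X₁/2` and `∓1/(2(a+b))`: the factor `1/√(ab)`
contributes `-X₁/2`, and the `arctan` factor contributes `∓1/(2(a+b))` because
`x · d/dx arctan √x = √x / (2(1 + x))`. Adding and subtracting the two identities gives
`S X₁ = -X₁` and `T X₁ = 1/(a+b)`.
-/

open Real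

lemma hasDerivAt_arctan_sqrt {x : ℝ} (hx : 0 < x) :
    HasDerivAt (fun y => arctan √y) (1 / (2 * √x * (1 + x))) x :=
  ((hasDerivAt_arctan √x).comp x (hasDerivAt_sqrt hx.ne')).congr_deriv <| by
    rw [sq_sqrt hx.le]; field_simp

lemma mul_deriv_X1_fst {a b : ℝ} (ha : 0 < a) (hb : 0 < b) :
    a * deriv (fun a' => arctan √(b / a') / √(a' * b)) a
      = -(1 / (2 * (a + b))) - arctan √(b / a) / √(a * b) / 2 := by
  have hnum := (hasDerivAt_arctan_sqrt (div_pos hb ha)).comp a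
    ((hasDerivAt_const a b).fun_div (hasDerivAt_id a) ha.ne')
  have hden := (hasDerivAt_sqrt (mul_pos ha hb).ne').comp a ((hasDerivAt_id a).mul_const b)
  have hX : HasDerivAt (fun a' => arctan √(b / a') / √(a' * b)) _ a :=
    hnum.fun_div hden (sqrt_ne_zero'.mpr (mul_pos ha hb))
  rw [hX.deriv]
  obtain ⟨s, hs, rfl⟩ : ∃ s, 0 < s ∧ a = s ^ 2 := ⟨√a, sqrt_pos.mpr ha, (sq_sqrt ha.le).symm⟩
  obtain ⟨t, ht, rfl⟩ : ∃ t, 0 < t ∧ b = t ^ 2 := ⟨√b, sqrt_pos.mpr hb, (sq_sqrt hb.le).symm⟩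
  simp only [Function.comp_apply, ← div_pow, ← mul_pow, sqrt_sq (div_pos ht hs).le,
    sqrt_sq (mul_pos hs ht).le]
  field_simp
  ring

lemma mul_deriv_X1_snd {a b : ℝ} (ha : 0 < a) (hb : 0 < b) :
    b * deriv (fun b' => arctan √(b' / a) / √(a * b')) b
      = 1 / (2 * (a + b)) - arctan √(b / a) / √(a * b) / 2 := by
  have hnum := (hasDerivAt_arctan_sqrt (div_pos hb ha)).comp b ((hasDerivAt_id b).div_const a)
  have hden := (hasDerivAt_sqrt (mul_pos ha hb).ne').comp b ((hasDerivAt_id b).const_mul a)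
  have hX : HasDerivAt (fun b' => arctan √(b' / a) / √(a * b')) _ b :=
    hnum.fun_div hden (sqrt_ne_zero'.mpr (mul_pos ha hb))
  rw [hX.deriv]
  obtain ⟨s, hs, rfl⟩ : ∃ s, 0 < s ∧ a = s ^ 2 := ⟨√a, sqrt_pos.mpr ha, (sq_sqrt ha.le).symm⟩
  obtain ⟨t, ht, rfl⟩ : ∃ t, 0 < t ∧ b = t ^ 2 := ⟨√b, sqrt_pos.mpr hb, (sq_sqrt hb.le).symm⟩
  simp only [Function.comp_apply, id, ← div_pow, ← mul_pow, sqrt_sq (div_pos ht hs).le,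
    sqrt_sq (mul_pos hs ht).le]
  field_simp

/-- `X₁ = arctan(√(b/a))/√(ab)` satisfies `S X₁ = −X₁` and `T X₁ = 1/(a+b)`,
where `S = a∂_a + b∂_b` and `T = −a∂_a + b∂_b`. -/
theorem X1_ST (a b : ℝ) (ha : 0 < a) (hb : 0 < b) :
    (a * deriv (fun a' => Real.arctan (Real.sqrt (b / a')) / Real.sqrt (a' * b)) a +
        b * deriv (fun b' => Real.arctan (Real.sqrt (b' / a)) / Real.sqrt (a * b')) b
      = -(Real.arctan (Real.sqrt (b / a)) / Real.sqrt (a * b))) ∧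
    (-(a * deriv (fun a' => Real.arctan (Real.sqrt (b / a')) / Real.sqrt (a' * b)) a) +
        b * deriv (fun b' => Real.arctan (Real.sqrt (b' / a)) / Real.sqrt (a * b')) b
      = 1 / (a + b)) := by
  rw [mul_deriv_X1_fst ha hb, mul_deriv_X1_snd ha hb]
  have hab : a + b ≠ 0 := (add_pos ha hb).ne'
  exact ⟨by ring, by field_simp; ring⟩
end
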